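/- arXiv:1205.1271 — 3 statements merged into one kernel-verified Lean document; each statement's English description precedes it below -/
import Mathlib

section
/- Let T' be a shadowless solution of an instance (G, S, T, k) of Disjoint Subset-DFVS Compression, and let C_ℓ be the last strongly connected component in a topological ordering of the strongly connected components of G ∖ T'. Then: (1) C_ℓ contains a nonempty subset of T; (2) no edge of S has both endpoints in C_ℓ; (3) for every edge (u,v) ∈ S with u ∈ C_ℓ, we have v ∈ T'; and (4) if T' contains no head of an S-edge, then C_ℓ contains no tail of an S-edge. -/
/-!
The last strongly connected component `C` of `G ∖ T'` is closed under reachability in `G ∖ T'`.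
Shadowlessness lets every vertex of `C` reach `T`, so `C` meets `T`. An `S`-edge inside `C`
would close, together with a path back through `C`, an `S`-closed-walk in `G ∖ T'`; hence the
head of an `S`-edge leaving `C` must lie in `T'`, which gives (3) and (4).
-/

variable {V : Type*}

/-- `Reach E W a b`: there is a path from `a` to `b` in `G ∖ W`. -/
def Reach (E : V → V → Prop) (W : Set V) (a b : V) : Prop :=
  a ∉ W ∧ b ∉ W ∧ Relation.ReflTransGen (fun x y => E x y ∧ x ∉ W ∧ y ∉ W) a b

/-- `G ∖ W` has a closed walk using an edge of `S` (an `S`-closed-walk). -/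
def HasSCW (E : V → V → Prop) (S : Set (V × V)) (W : Set V) : Prop :=
  ∃ l : List V, l.Chain' E ∧ 2 ≤ l.length ∧ l.head? = l.getLast? ∧
    (∀ x ∈ l, x ∉ W) ∧ ∃ q ∈ l.zip l.tail, q ∈ S

lemma Reach.mem_of_mem {E : V → V → Prop} {W C : Set V}
    (hC : ∀ a ∈ C, ∀ b, E a b → b ∉ W → b ∈ C) {a b : V} (ha : a ∈ C) (h : Reach E W a b) :
    b ∈ C := by
  obtain ⟨-, -, hab⟩ := h
  induction hab with
  | refl => exact ha
  | tail _ hbc ih => exact hC _ ih _ hbc.1 hbc.2.2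

lemma hasSCW_of_reach {E : V → V → Prop} {S : Set (V × V)} {W : Set V} {p : V × V}
    (hp : p ∈ S) (hE : E p.1 p.2) (h : Reach E W p.2 p.1) : HasSCW E S W := by
  obtain ⟨h2, h1, hpath⟩ := h
  obtain ⟨l, hchain, hlast⟩ := List.exists_isChain_cons_of_relationReflTransGen hpath
  have hnotin : ∀ x ∈ p.2 :: l, x ∉ W :=
    hchain.induction _ _ (fun _ _ hxy _ => hxy.2.2) fun _ => h2
  refine ⟨p.1 :: p.2 :: l, .cons_cons hE (hchain.imp fun _ _ h => h.1), by simp, ?_,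
    ?_, p, by simp, hp⟩
  · simp [List.getLast?_eq_some_getLast, hlast]
  · rintro x (_ | ⟨_, hx⟩)
    exacts [h1, hnotin x hx]

theorem stmt17_general (E : V → V → Prop) (S : Set (V × V))
    (hSE : ∀ p ∈ S, E p.1 p.2) (T : Set V)
    (T' : Set V)
    (hsol : ¬ HasSCW E S T')
    (hshadowless : ∀ v ∉ T',
      (∃ t ∈ T, Reach E T' v t) ∧ (∃ t ∈ T, Reach E T' t v))
    (C : Set V) (hCne : C.Nonempty) (hCT' : Disjoint C T')
    (hCconn : ∀ a ∈ C, ∀ b ∈ C, Reach E T' a b)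
    (hClast : ∀ a ∈ C, ∀ b : V, E a b → b ∉ T' → b ∈ C) :
    (C ∩ T).Nonempty ∧
      (∀ p ∈ S, ¬ (p.1 ∈ C ∧ p.2 ∈ C)) ∧
      (∀ p ∈ S, p.1 ∈ C → p.2 ∈ T') ∧
      ((∀ p ∈ S, p.2 ∉ T') → ∀ p ∈ S, p.1 ∉ C) := by
  have hmeetsT : (C ∩ T).Nonempty := by
    obtain ⟨a, ha⟩ := hCne
    obtain ⟨⟨t, htT, hat⟩, -⟩ := hshadowless a (hCT'.notMem_of_mem_left ha)
    exact ⟨t, hat.mem_of_mem hClast ha, htT⟩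
  have hnoS : ∀ p ∈ S, ¬ (p.1 ∈ C ∧ p.2 ∈ C) := fun p hp ⟨h1, h2⟩ =>
    hsol (hasSCW_of_reach hp (hSE p hp) (hCconn _ h2 _ h1))
  have hhead : ∀ p ∈ S, p.1 ∈ C → p.2 ∈ T' := fun p hp h1 => by
    by_contra h2
    exact hnoS p hp ⟨h1, hClast _ h1 _ (hSE p hp) h2⟩
  exact ⟨hmeetsT, hnoS, hhead, fun hT' p hp h1 => hT' p hp (hhead p hp h1)⟩

/-- Properties of the last strongly connected component `C` of `G ∖ T'` for a
shadowless solution `T'` of an instance `(G, S, T, k)` of Disjoint Subset-DFVS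
Compression:
(1) `C` contains a nonempty subset of `T`;
(2) no edge of `S` has both endpoints in `C`;
(3) for every edge `(u,v) ∈ S` with `u ∈ C` we have `v ∈ T'`;
(4) if `T'` contains no head of an `S`-edge, then `C` contains no tail of an
`S`-edge.
Here `C` is a nonempty set of vertices of `G ∖ T'` that is strongly connected
in `G ∖ T'` and has no edges leaving it (the last SCC in topological order). -/
theorem stmt17 [Fintype V] (E : V → V → Prop) (S : Set (V × V))
    (hSE : ∀ p ∈ S, E p.1 p.2) (T : Set V) (k : ℕ)
    (hT : ¬ HasSCW E S T)
    (T' : Set V) (hT'T : Disjoint T' T) (hk : T'.ncard ≤ k)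
    (hsol : ¬ HasSCW E S T')
    (hshadowless : ∀ v ∉ T',
      (∃ t ∈ T, Reach E T' v t) ∧ (∃ t ∈ T, Reach E T' t v))
    (hTS : ∀ t ∈ T, ∃ p ∈ S, Reach E ∅ t p.1)
    (C : Set V) (hCne : C.Nonempty) (hCT' : Disjoint C T')
    (hCconn : ∀ a ∈ C, ∀ b ∈ C, Reach E T' a b)
    (hClast : ∀ a ∈ C, ∀ b : V, E a b → b ∉ T' → b ∈ C) :
    (C ∩ T).Nonempty ∧
      (∀ p ∈ S, ¬ (p.1 ∈ C ∧ p.2 ∈ C)) ∧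
      (∀ p ∈ S, p.1 ∈ C → p.2 ∈ T') ∧
      ((∀ p ∈ S, p.2 ∉ T') → ∀ p ∈ S, p.1 ∉ C) :=
  stmt17_general E S hSE T T' hsol hshadowless C hCne hCT' hCconn hClast
end

section
/- In the auxiliary graph construction of Theorem 6.3: given G, S ⊆ E(G), nonempty T₀ ⊆ V(G), and the two-copy auxiliary graph G' with source s and sink t, if x is a k-critical vertex with respect to T₀ witnessed by u and W, then W' = {v_in, v_out : v ∈ W} is an s–t separator in G' of size at most 2k, and u_out is reachable from s in G' ∖ W'. -/
variable {V : Type*}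

/-- Vertices of the auxiliary graph: `Sum.inl (v, false)` is `v_in`,
`Sum.inl (v, true)` is `v_out`, `Sum.inr false` is the source `s`, and
`Sum.inr true` is the sink `t`. -/
abbrev Aux (V : Type*) := (V × Bool) ⊕ Bool

/-- The edge relation of the auxiliary graph `G'`: for each edge `(u,v)` of `G`
add `(u_out, v_in)` if `(u,v) ∈ S` and `(u_out, v_out)` otherwise; add
`(v_in, v_out)` and `(v_in, t)` for every vertex `v`; add `(s, v_out)` for
every `v ∈ T₀`. -/
def auxE (E : V → V → Prop) (S : Set (V × V)) (T₀ : Set V) :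
    Aux V → Aux V → Prop
  | Sum.inl (u, true), Sum.inl (v, false) => E u v ∧ (u, v) ∈ S
  | Sum.inl (u, true), Sum.inl (v, true) => E u v ∧ (u, v) ∉ S
  | Sum.inl (u, false), Sum.inl (v, true) => u = v
  | Sum.inl (_, false), Sum.inr true => True
  | Sum.inr false, Sum.inl (v, true) => v ∈ T₀
  | _, _ => False

/-- The lift `W' = {v_in, v_out : v ∈ W}` of a vertex set `W` to the auxiliary
graph. -/
def auxLift (W : Set V) : Set (Aux V) :=
  {a | ∃ v ∈ W, a = Sum.inl (v, false) ∨ a = Sum.inl (v, true)}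

/-!
Call `v_out` good when `v` is reachable from `T₀` in `G ∖ W`. The source points only at good
out-copies, and within `G' ∖ W'` a good out-copy points only at good out-copies: an `S`-edge out
of it would be traversable from `T₀`, so it must end at the in-copy of a vertex of `W`. Hence
from `s` one reaches only good out-copies, never an in-copy, and so never `t`. For the same
reason a path from `T₀` to `u` in `G ∖ W` uses no `S`-edge and lifts to a path of out-copies.
-/

@[simp]
lemma mem_auxLift_inl {W : Set V} {v : V} {b : Bool} :
    (Sum.inl (v, b) : Aux V) ∈ auxLift W ↔ v ∈ W := by
  constructor
  · rintro ⟨w, hw, h | h⟩ <;> simp_all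
  · intro hv
    exact ⟨v, hv, by cases b <;> simp⟩

@[simp]
lemma inr_notMem_auxLift {W : Set V} {b : Bool} : (Sum.inr b : Aux V) ∉ auxLift W := by
  rintro ⟨w, -, h | h⟩ <;> simp at h

lemma auxLift_eq_image_prod (W : Set V) : auxLift W = Sum.inl '' (W ×ˢ Set.univ) := by
  ext (⟨v, b⟩ | b) <;> simp

lemma ncard_auxLift (W : Set V) : (auxLift W).ncard = 2 * W.ncard := by
  rw [auxLift_eq_image_prod, Set.ncard_image_of_injective _ Sum.inl_injective, Set.ncard_prod,
    Set.ncard_univ, Nat.card_eq_fintype_card, Fintype.card_bool, mul_comm]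

def NoTraversableSEdge (E : V → V → Prop) (S : Set (V × V)) (T₀ W : Set V) : Prop :=
  ∀ p ∈ S, ¬ (p.1 ∉ W ∧ p.2 ∉ W ∧ ∃ t ∈ T₀, Reach E W t p.1)

section NoTraversableSEdge

variable {E : V → V → Prop} {S : Set (V × V)} {T₀ W : Set V}

lemma reach_source_out_of_reach (htrav : NoTraversableSEdge E S T₀ W) {t b : V}
    (ht : t ∈ T₀) (hreach : Reach E W t b) :
    Reach (auxE E S T₀) (auxLift W) (Sum.inr false) (Sum.inl (b, true)) := by
  obtain ⟨htW, hbW, hpath⟩ := hreach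
  refine ⟨inr_notMem_auxLift, mem_auxLift_inl.not.mpr hbW, ?_⟩
  induction hpath with
  | refl => exact .single ⟨ht, inr_notMem_auxLift, mem_auxLift_inl.not.mpr htW⟩
  | @tail b c hpath hbc ih =>
    obtain ⟨hE, hbW, hcW⟩ := hbc
    have hnS : (b, c) ∉ S := fun hS => htrav (b, c) hS ⟨hbW, hcW, t, ht, htW, hbW, hpath⟩
    exact (ih hbW).tail
      ⟨⟨hE, hnS⟩, mem_auxLift_inl.not.mpr hbW, mem_auxLift_inl.not.mpr hcW⟩

lemma eq_source_or_out_of_reachable (htrav : NoTraversableSEdge E S T₀ W) {a : Aux V}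
    (h : Relation.ReflTransGen
      (fun x y => auxE E S T₀ x y ∧ x ∉ auxLift W ∧ y ∉ auxLift W) (Sum.inr false) a) :
    a = Sum.inr false ∨ ∃ w, a = Sum.inl (w, true) ∧ ∃ t ∈ T₀, Reach E W t w := by
  induction h with
  | refl => exact .inl rfl
  | @tail a b _ hab ih =>
    obtain ⟨hE, -, hbW⟩ := hab
    rcases ih with rfl | ⟨w, rfl, t, ht, htW, hwW, hpath⟩
    · match b, hE with
      | Sum.inl (v, true), hv =>
        have hvW : v ∉ W := mem_auxLift_inl.not.mp hbW
        exact .inr ⟨v, rfl, v, hv, hvW, hvW, .refl⟩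
    · match b, hE with
      | Sum.inl (v, false), ⟨_, hS⟩ =>
        exact (htrav (w, v) hS
          ⟨hwW, mem_auxLift_inl.not.mp hbW, t, ht, htW, hwW, hpath⟩).elim
      | Sum.inl (v, true), ⟨hE, _⟩ =>
        have hvW : v ∉ W := mem_auxLift_inl.not.mp hbW
        exact .inr ⟨v, rfl, t, ht, htW, hvW, hpath.tail ⟨hE, hwW, hvW⟩⟩

lemma not_reach_source_sink (htrav : NoTraversableSEdge E S T₀ W) :
    ¬ Reach (auxE E S T₀) (auxLift W) (Sum.inr false) (Sum.inr true) := by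
  rintro ⟨-, -, h⟩
  rcases eq_source_or_out_of_reachable htrav h with h | ⟨w, h, -⟩ <;> simp at h

end NoTraversableSEdge

theorem stmt18_general (E : V → V → Prop) (S : Set (V × V)) (T₀ : Set V) (k : ℕ) (u : V)
    (W : Set V) (hWk : W.ncard ≤ k)
    (hu : ∃ t ∈ T₀, Reach E W t u)
    (htrav : ∀ p ∈ S, ¬ (p.1 ∉ W ∧ p.2 ∉ W ∧ ∃ t ∈ T₀, Reach E W t p.1)) :
    (auxLift W).ncard ≤ 2 * k ∧
      ¬ Reach (auxE E S T₀) (auxLift W) (Sum.inr false) (Sum.inr true) ∧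
      Reach (auxE E S T₀) (auxLift W) (Sum.inr false) (Sum.inl (u, true)) := by
  obtain ⟨t, ht, htu⟩ := hu
  refine ⟨?_, not_reach_source_sink htrav, reach_source_out_of_reach htrav ht htu⟩
  rw [ncard_auxLift]
  omega

/-- If `x` is a `k`-critical vertex with respect to `T₀`, witnessed by `u` and
`W` (that is, `(u,x) ∈ S`, `W ⊆ V ∖ T₀` has `|W| ≤ k`, `x ∈ W`, `u` is
reachable from `T₀` in `G ∖ W`, and no edge of `S` is traversable from `T₀` in
`G ∖ W`), then `W' = {v_in, v_out : v ∈ W}` is an `s–t` separator of size at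
most `2k` in the auxiliary graph `G'`, and `u_out` is reachable from `s` in
`G' ∖ W'`. -/
theorem stmt18 [Fintype V] (E : V → V → Prop) (S : Set (V × V))
    (hSE : ∀ p ∈ S, E p.1 p.2) (T₀ : Set V) (hT₀ : T₀.Nonempty)
    (k : ℕ) (x u : V) (W : Set V)
    (hxT₀ : x ∉ T₀) (hux : (u, x) ∈ S)
    (hWT₀ : Disjoint W T₀) (hWk : W.ncard ≤ k) (hxW : x ∈ W)
    (hu : ∃ t ∈ T₀, Reach E W t u)
    (htrav : ∀ p ∈ S, ¬ (p.1 ∉ W ∧ p.2 ∉ W ∧ ∃ t ∈ T₀, Reach E W t p.1)) :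
    (auxLift W).ncard ≤ 2 * k ∧
      ¬ Reach (auxE E S T₀) (auxLift W) (Sum.inr false) (Sum.inr true) ∧
      Reach (auxE E S T₀) (auxLift W) (Sum.inr false) (Sum.inl (u, true)) :=
  stmt18_general E S T₀ k u W hWk hu htrav
end

section
/- Replacement by an important separator preserves being a solution: Let (G, S, T, k) be an instance of Disjoint Subset-DFVS Compression with shadowless solution T', let T₀ ⊆ T be the subset of T in the last SCC of G ∖ T', and suppose no tail of an S-edge is reachable from T₀ in G ∖ T'. Let G⁺ be G with a new vertex t and an edge (u,t) for every tail u of an S-edge, let T** ⊆ T' be a minimal T₀–({t} ∪ (T ∖ T₀)) separator in G⁺ contained in the set of vertices of T' reachable from T₀ without passing other T' vertices, and let T*** be an important T₀–({t} ∪ (T ∖ T₀)) separator with |T***| ≤ |T**| and R⁺_{G⁺∖T**}(T₀) ⊊ R⁺_{G⁺∖T***}(T₀). Then T'' = (T' ∖ T**) ∪ T*** is also a solution of (G, S, T, k). -/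
/-
A closed walk of `G ∖ T''` through an `S`-edge must meet `T'`, hence `T**`, at some vertex
`w`. By the choice of `T**`, `w` has an in-neighbour `z` reachable from `T₀` in `G ∖ T'`, so
`z` lies in `R⁺_{G⁺∖T**}(T₀) ⊆ R⁺_{G⁺∖T***}(T₀)`. Following the edge `z → w`, the closed walk
up to the tail of its `S`-edge and the edge from that tail to `t`, we get a `T₀–t` path in
`G⁺ ∖ T***`, contradicting that `T***` is a separator. The size bound is `|T***| ≤ |T**|`.
-/

variable {V : Type*}

/-- `W` is an `X–Y` separator avoiding the undeletable vertices `Vinf`. -/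
def IsSep (E : V → V → Prop) (Vinf X Y W : Set V) : Prop :=
  Disjoint W (X ∪ Y ∪ Vinf) ∧ ∀ x ∈ X, ∀ y ∈ Y, ¬ Reach E W x y

/-- A minimal `X–Y` separator: no proper subset is an `X–Y` separator. -/
def IsMinSep (E : V → V → Prop) (Vinf X Y W : Set V) : Prop :=
  IsSep E Vinf X Y W ∧ ∀ W' ⊂ W, ¬ IsSep E Vinf X Y W'

/-- `R⁺_{G∖W}(X)`: the set of vertices reachable from `X` in `G ∖ W`. -/
def ReachSet (E : V → V → Prop) (W X : Set V) : Set V :=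
  {b | ∃ a ∈ X, Reach E W a b}

/-- An important `X–Y` separator. -/
def IsImpSep (E : V → V → Prop) (Vinf X Y W : Set V) : Prop :=
  IsMinSep E Vinf X Y W ∧
    ¬ ∃ W', IsSep E Vinf X Y W' ∧ W'.ncard ≤ W.ncard ∧
      ReachSet E W X ⊂ ReachSet E W' X

/-- The edge relation of `G⁺`: `G` together with a new vertex `t = none` and an
edge `(u, t)` for every tail `u` of an `S`-edge. -/
def plusE (E : V → V → Prop) (S : Set (V × V)) : Option V → Option V → Prop
  | some a, some b => E a b
  | some a, none => ∃ b, (a, b) ∈ S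
  | none, _ => False

theorem List.IsChain.reflTransGen_of_head?_eq_getLast? {α : Type*} {r : α → α → Prop}
    {l : List α} (h : l.IsChain r) (hc : l.head? = l.getLast?) {x y : α} (hx : x ∈ l)
    (hy : y ∈ l) : Relation.ReflTransGen r x y := by
  have hne : l ≠ [] := List.ne_nil_of_mem hx
  have hhead : l.head hne = l.getLast hne := by
    simpa [List.head?_eq_some_head hne, List.getLast?_eq_some_getLast hne] using hc
  have to_last : Relation.ReflTransGen r x (l.getLast hne) :=
    h.backwards_induction (Relation.ReflTransGen r · (l.getLast hne)) l
      (fun _ _ hxy hy => hy.head hxy) (fun _ => .refl) x hx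
  have from_head : Relation.ReflTransGen r (l.head hne) y :=
    h.induction (Relation.ReflTransGen r (l.head hne)) l
      (fun _ _ hxy hx => hx.tail hxy) (fun _ => .refl) y hy
  exact to_last.trans (hhead ▸ from_head)

namespace Reach

variable {V' : Type*} {E : V → V → Prop} {W W' : Set V} {a b c : V}

theorem mono (hW : W' ⊆ W) (h : Reach E W a b) : Reach E W' a b :=
  ⟨fun ha => h.1 (hW ha), fun hb => h.2.1 (hW hb),
    Relation.ReflTransGen.mono
      (fun _ _ ⟨he, hx, hy⟩ => ⟨he, fun hx' => hx (hW hx'), fun hy' => hy (hW hy')⟩)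
      _ _ h.2.2⟩

theorem tail (h : Reach E W a b) (hbc : E b c) (hc : c ∉ W) : Reach E W a c :=
  ⟨h.1, hc, h.2.2.tail ⟨hbc, h.2.1, hc⟩⟩

theorem trans (hab : Reach E W a b) (hbc : Reach E W b c) : Reach E W a c :=
  ⟨hab.1, hbc.2.1, hab.2.2.trans hbc.2.2⟩

theorem image {E' : V' → V' → Prop} {f : V → V'} (h : Reach E W a b)
    (hf : Function.Injective f) (hE : ∀ x y, E x y → E' (f x) (f y)) :
    Reach E' (f '' W) (f a) (f b) :=
  ⟨hf.mem_set_image.not.mpr h.1, hf.mem_set_image.not.mpr h.2.1,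
    h.2.2.lift f fun _ _ ⟨he, hx, hy⟩ =>
      ⟨hE _ _ he, hf.mem_set_image.not.mpr hx, hf.mem_set_image.not.mpr hy⟩⟩

theorem of_mem_closed_walk {l : List V} (hl : l.IsChain E) (hc : l.head? = l.getLast?)
    (hW : ∀ x ∈ l, x ∉ W) (ha : a ∈ l) (hb : b ∈ l) : Reach E W a b := by
  refine ⟨hW a ha, hW b hb, List.IsChain.reflTransGen_of_head?_eq_getLast? ?_ hc ha hb⟩
  exact hl.imp_of_mem_imp fun x y hx hy hxy => ⟨hxy, hW x hx, hW y hy⟩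

end Reach

variable {E : V → V → Prop} {S : Set (V × V)}

theorem exists_mem_reach_of_hasSCW {W W' : Set V} (hW : ¬ HasSCW E S W)
    (hW' : HasSCW E S W') : ∃ w ∈ W, ∃ p ∈ S, Reach E W' w p.1 := by
  obtain ⟨l, hchain, hlen, hclosed, havoid, p, hpl, hpS⟩ := hW'
  obtain ⟨w, hwl, hwW⟩ : ∃ w ∈ l, w ∈ W := by
    by_contra! hno
    exact hW ⟨l, hchain, hlen, hclosed, hno, p, hpl, hpS⟩
  exact ⟨w, hwW, p, hpS,
    Reach.of_mem_closed_walk hchain hclosed havoid hwl (List.of_mem_zip hpl).1⟩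

theorem IsSep.disjoint_of_image_subset {V' : Type*} {E' : V' → V' → Prop} {Vinf X Y : Set V'}
    {f : V → V'} {W T : Set V} (h : IsSep E' Vinf X Y (f '' W)) (hT : f '' T ⊆ X ∪ Y) :
    Disjoint W T :=
  Set.disjoint_left.mpr fun _ haW haT =>
    Set.disjoint_left.mp h.1 ⟨_, haW, rfl⟩ (Or.inl (hT ⟨_, haT, rfl⟩))

theorem Set.ncard_diff_union_le {A B D : Set V} (hA : A.Finite) (hB : B ⊆ A)
    (hD : D.ncard ≤ B.ncard) : (A \ B ∪ D).ncard ≤ A.ncard :=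
  calc (A \ B ∪ D).ncard ≤ (A \ B).ncard + D.ncard := Set.ncard_union_le _ _
    _ ≤ (A \ B).ncard + B.ncard := Nat.add_le_add_left hD _
    _ = A.ncard := Set.ncard_sdiff_add_ncard_of_subset hB hA

theorem not_hasSCW_diff_union {T' Tss Tsss X : Set V} {Vinf Y : Set (Option V)} (hY : none ∈ Y)
    (hsol : ¬ HasSCW E S T') (hTss : Tss ⊆ T')
    (hTssStar : ∀ w ∈ Tss, ∃ t ∈ X, ∃ z : V, Reach E T' t z ∧ E z w)
    (hsep : IsSep (plusE E S) Vinf (some '' X) Y (some '' Tsss))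
    (hdom : ReachSet (plusE E S) (some '' Tss) (some '' X) ⊆
      ReachSet (plusE E S) (some '' Tsss) (some '' X)) :
    ¬ HasSCW E S (T' \ Tss ∪ Tsss) := by
  intro hSCW
  obtain ⟨w, hwT', p, hpS, hwp⟩ := exists_mem_reach_of_hasSCW hsol hSCW
  have hwTss : w ∈ Tss := by
    by_contra hw
    exact hwp.1 (Or.inl ⟨hwT', hw⟩)
  obtain ⟨t, htX, z, htz, hzw⟩ := hTssStar w hwTss
  obtain ⟨x, hxX, hxz⟩ : some z ∈ ReachSet (plusE E S) (some '' Tsss) (some '' X) :=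
    hdom ⟨some t, ⟨t, htX, rfl⟩,
      (htz.mono hTss).image (Option.some_injective V) fun _ _ h => h⟩
  have hwp' : Reach (plusE E S) (some '' Tsss) (some w) (some p.1) :=
    (hwp.mono Set.subset_union_right).image (Option.some_injective V) fun _ _ h => h
  have hzw' : plusE E S (some z) (some w) := hzw
  have hxt : Reach (plusE E S) (some '' Tsss) x none :=
    ((hxz.tail hzw' hwp'.1).trans hwp').tail ⟨p.2, hpS⟩ (by simp)
  exact hsep.2 x hxX none hY hxt

theorem stmt19_general [Fintype V] (E : V → V → Prop) (S : Set (V × V))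
    (T : Set V) (k : ℕ)
    (T' : Set V) (hT'T : Disjoint T' T) (hk : T'.ncard ≤ k)
    (hsol : ¬ HasSCW E S T')
    (C : Set V)
    (Tss : Set V) (hTss : Tss ⊆ T')
    (hTssStar : ∀ w ∈ Tss, ∃ t ∈ C ∩ T, ∃ z : V, Reach E T' t z ∧ E z w)
    (Tsss : Set V)
    (hTsssImp : IsImpSep (plusE E S) ∅ (some '' (C ∩ T))
      (insert none (some '' (T \ (C ∩ T)))) (some '' Tsss))
    (hcard : Tsss.ncard ≤ Tss.ncard)
    (hdom : ReachSet (plusE E S) (some '' Tss) (some '' (C ∩ T)) ⊂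
      ReachSet (plusE E S) (some '' Tsss) (some '' (C ∩ T))) :
    Disjoint ((T' \ Tss) ∪ Tsss) T ∧ ((T' \ Tss) ∪ Tsss).ncard ≤ k ∧
      ¬ HasSCW E S ((T' \ Tss) ∪ Tsss) := by
  have hsep := hTsssImp.1.1
  have hT_split : some '' T ⊆ some '' (C ∩ T) ∪ insert none (some '' (T \ (C ∩ T))) := by
    rintro _ ⟨a, ha, rfl⟩
    by_cases hC : a ∈ C
    · exact Or.inl ⟨a, ⟨hC, ha⟩, rfl⟩
    · exact Or.inr (Or.inr ⟨a, ⟨ha, fun h => hC h.1⟩, rfl⟩)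
  refine ⟨?_, ?_, ?_⟩
  · exact Set.disjoint_union_left.mpr
      ⟨hT'T.mono_left Set.sdiff_subset, hsep.disjoint_of_image_subset hT_split⟩
  · exact (Set.ncard_diff_union_le (Set.toFinite T') hTss hcard).trans hk
  · exact not_hasSCW_diff_union (Set.mem_insert _ _) hsol hTss hTssStar
      hsep hdom.subset

/-- Replacement by an important separator preserves being a solution.  Let `T'`
be a shadowless solution of an instance `(G, S, T, k)` of Disjoint Subset-DFVS
Compression, let `C` be the last SCC of `G ∖ T'` and `T₀ = C ∩ T`, and suppose
no tail of an `S`-edge is reachable from `T₀` in `G ∖ T'`.  Let `T**` be a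
minimal `T₀–({t} ∪ (T ∖ T₀))` separator in `G⁺` contained in the set of
vertices of `T'` reachable from `T₀` without passing through other vertices of
`T'`, and let `T***` be an important `T₀–({t} ∪ (T ∖ T₀))` separator with
`|T***| ≤ |T**|` and `R⁺_{G⁺∖T**}(T₀) ⊊ R⁺_{G⁺∖T***}(T₀)`.  Then
`T'' = (T' ∖ T**) ∪ T***` is also a solution of `(G, S, T, k)`. -/
theorem stmt19 [Fintype V] (E : V → V → Prop) (S : Set (V × V))
    (hSE : ∀ p ∈ S, E p.1 p.2) (T : Set V) (k : ℕ)
    (hT : ¬ HasSCW E S T)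
    (T' : Set V) (hT'T : Disjoint T' T) (hk : T'.ncard ≤ k)
    (hsol : ¬ HasSCW E S T')
    (hshadowless : ∀ v ∉ T',
      (∃ t ∈ T, Reach E T' v t) ∧ (∃ t ∈ T, Reach E T' t v))
    -- `C` is the last SCC of `G ∖ T'` and `T₀ = C ∩ T` is nonempty
    (C : Set V) (hCne : C.Nonempty) (hCT' : Disjoint C T')
    (hCconn : ∀ a ∈ C, ∀ b ∈ C, Reach E T' a b)
    (hClast : ∀ a ∈ C, ∀ b : V, E a b → b ∉ T' → b ∈ C)
    (hT₀ne : (C ∩ T).Nonempty)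
    -- no tail of an `S`-edge is reachable from `T₀` in `G ∖ T'`
    (hreach : ∀ p ∈ S, ∀ t ∈ C ∩ T, ¬ Reach E T' t p.1)
    (Tss : Set V) (hTss : Tss ⊆ T')
    (hTssStar : ∀ w ∈ Tss, ∃ t ∈ C ∩ T, ∃ z : V, Reach E T' t z ∧ E z w)
    (hTssMin : IsMinSep (plusE E S) ∅ (some '' (C ∩ T))
      (insert none (some '' (T \ (C ∩ T)))) (some '' Tss))
    (Tsss : Set V)
    (hTsssImp : IsImpSep (plusE E S) ∅ (some '' (C ∩ T))
      (insert none (some '' (T \ (C ∩ T)))) (some '' Tsss))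
    (hcard : Tsss.ncard ≤ Tss.ncard)
    (hdom : ReachSet (plusE E S) (some '' Tss) (some '' (C ∩ T)) ⊂
      ReachSet (plusE E S) (some '' Tsss) (some '' (C ∩ T))) :
    Disjoint ((T' \ Tss) ∪ Tsss) T ∧ ((T' \ Tss) ∪ Tsss).ncard ≤ k ∧
      ¬ HasSCW E S ((T' \ Tss) ∪ Tsss) :=
  stmt19_general E S T k T' hT'T hk hsol C Tss hTss hTssStar Tsss hTsssImp hcard hdom
end
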